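/- arXiv:1309.2831 — 8 statements merged into one kernel-verified Lean document; each statement's English description precedes it below -/
import Mathlib

section
/- Let $p \ge 5$ be a prime and let $a, b \in \mathrm{GF}(p)$ with $a \ne 0$. Suppose the cubic polynomial $f(X) = X^3 + aX + b$ is irreducible over $\mathrm{GF}(p)$, and write $X^p \equiv c_2 X^2 + c_1 X + c_0 \pmod{f(X)}$ for the (unique) coefficients $c_0, c_1, c_2 \in \mathrm{GF}(p)$ of the remainder of $X^p$ upon division by $f$. Then $c_2 \ne 0$, and the element $t = 3a \cdot c_2^{-1}$ satisfies $t^2 = -(4a^3 + 27b^2)$ in $\mathrm{GF}(p)$. -/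
/-!
In `K = GF(p)[X]/(f)`, a field with `p³` elements, the roots of `f` are `α`, `β = α^p` and
`γ = α^(p²)`, pairwise distinct because `f` has no root in `GF(p)`, and `γ^p = α`. Since
`X^p ≡ g (mod f)` with `g = c₂X² + c₁X + c₀`, the quadratic `g` permutes them cyclically:
`α ↦ β ↦ γ ↦ α`. Cramer's rule for this Vandermonde system gives
`c₂ · (α-β)(α-γ)(β-γ) = (α+β+γ)² - 3(αβ+βγ+γα) = -3a` by Vieta, while
`((α-β)(α-γ)(β-γ))² = -(4a³ + 27b²)` is the discriminant. Hence `c₂ ≠ 0` and `3a/c₂ = -(α-β)(α-γ)(β-γ)`.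
-/

open Polynomial

section DepressedCubic

variable {R : Type*} [CommRing R]

theorem depressed_cubic_vieta [IsDomain R] {a b α β γ : R}
    (hα : α ^ 3 + a * α + b = 0) (hβ : β ^ 3 + a * β + b = 0) (hγ : γ ^ 3 + a * γ + b = 0)
    (hαβ : α ≠ β) (hαγ : α ≠ γ) (hβγ : β ≠ γ) :
    α + β + γ = 0 ∧ α * β + β * γ + γ * α = a ∧ α * β * γ = -b := by
  have pair : ∀ {x y : R}, x ^ 3 + a * x + b = 0 → y ^ 3 + a * y + b = 0 → x ≠ y →
      x ^ 2 + x * y + y ^ 2 + a = 0 := fun {x y} hx hy hxy =>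
    (mul_eq_zero.1 (show (x - y) * (x ^ 2 + x * y + y ^ 2 + a) = 0 by
      linear_combination hx - hy)).resolve_left (sub_ne_zero.2 hxy)
  have hαβ' := pair hα hβ hαβ
  have hsum : α + β + γ = 0 :=
    (mul_eq_zero.1 (show (β - γ) * (α + β + γ) = 0 by
      linear_combination hαβ' - pair hα hγ hαγ)).resolve_left (sub_ne_zero.2 hβγ)
  refine ⟨hsum, ?_, ?_⟩
  · linear_combination (α + β) * hsum - hαβ'
  · linear_combination α * β * hsum - α * hαβ' + hα

theorem sq_vandermonde_of_depressed_cubic_vieta {a b α β γ : R}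
    (h₁ : α + β + γ = 0) (h₂ : α * β + β * γ + γ * α = a) (h₃ : α * β * γ = -b) :
    ((α - β) * (α - γ) * (β - γ)) ^ 2 = -(4 * a ^ 3 + 27 * b ^ 2) := by
  obtain rfl : γ = -(α + β) := by linear_combination h₁
  subst h₂
  obtain rfl : b = -(α * β * -(α + β)) := by linear_combination h₃
  ring

theorem mul_vandermonde_of_cyclic_quadratic {c₀ c₁ c₂ α β γ : R}
    (hα : c₂ * α ^ 2 + c₁ * α + c₀ = β) (hβ : c₂ * β ^ 2 + c₁ * β + c₀ = γ)
    (hγ : c₂ * γ ^ 2 + c₁ * γ + c₀ = α) :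
    c₂ * ((α - β) * (α - γ) * (β - γ)) = (α + β + γ) ^ 2 - 3 * (α * β + β * γ + γ * α) := by
  linear_combination (β - γ) * hα - (α - γ) * hβ + (α - β) * hγ

end DepressedCubic

theorem depressed_cubic_disc_eq_sq_of_cyclic_quadratic {K : Type*} [Field K]
    {a b c₀ c₁ c₂ α β γ : K} (h3a : 3 * a ≠ 0)
    (hα : α ^ 3 + a * α + b = 0) (hβ : β ^ 3 + a * β + b = 0) (hγ : γ ^ 3 + a * γ + b = 0)
    (hαβ : α ≠ β) (hαγ : α ≠ γ) (hβγ : β ≠ γ)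
    (hgα : c₂ * α ^ 2 + c₁ * α + c₀ = β) (hgβ : c₂ * β ^ 2 + c₁ * β + c₀ = γ)
    (hgγ : c₂ * γ ^ 2 + c₁ * γ + c₀ = α) :
    c₂ ≠ 0 ∧ (3 * a * c₂⁻¹) ^ 2 = -(4 * a ^ 3 + 27 * b ^ 2) := by
  obtain ⟨h₁, h₂, h₃⟩ := depressed_cubic_vieta hα hβ hγ hαβ hαγ hβγ
  have hV := mul_vandermonde_of_cyclic_quadratic hgα hgβ hgγ
  rw [h₁, h₂] at hV
  have hc₂ : c₂ ≠ 0 := by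
    rintro rfl
    exact h3a (by linear_combination hV)
  have hquot : 3 * a * c₂⁻¹ = -((α - β) * (α - γ) * (β - γ)) := by
    field_simp
    linear_combination hV
  exact ⟨hc₂, by rw [hquot, neg_sq, sq_vandermonde_of_depressed_cubic_vieta h₁ h₂ h₃]⟩

theorem AdjoinRoot.natCard_eq_pow_natDegree {K : Type*} [Field K] {f : K[X]} (hf : f ≠ 0) :
    Nat.card (AdjoinRoot f) = Nat.card K ^ f.natDegree := by
  have := (AdjoinRoot.powerBasis hf).finite
  rw [Module.natCard_eq_pow_finrank (K := K), (AdjoinRoot.powerBasis hf).finrank,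
    AdjoinRoot.powerBasis_dim]

theorem AdjoinRoot.finite_of_finite {K : Type*} [Field K] [Finite K] {f : K[X]} (hf : f ≠ 0) :
    Finite (AdjoinRoot f) :=
  have := (AdjoinRoot.powerBasis hf).finite
  Module.finite_of_finite K

theorem pow_pow_pow_eq_self_of_natCard_eq {L : Type*} [Field L] [Finite L] {p : ℕ}
    (hcard : Nat.card L = p ^ 3) (x : L) : ((x ^ p) ^ p) ^ p = x := by
  cases nonempty_fintype L
  rw [show ((x ^ p) ^ p) ^ p = x ^ p ^ 3 by ring, ← hcard, Nat.card_eq_fintype_card,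
    FiniteField.pow_card]

section Frobenius

variable {p : ℕ} [hp : Fact p.Prime]

theorem aeval_pow_char_eq_pow {A : Type*} [CommSemiring A] [Algebra (ZMod p) A]
    (f : (ZMod p)[X]) (x : A) : aeval (x ^ p) f = aeval x f ^ p := by
  rw [← expand_aeval, ZMod.expand_card, map_pow]

variable {L : Type*} [Field L] [Algebra (ZMod p) L] {f : (ZMod p)[X]}

theorem pow_char_ne_self_of_irreducible (hf : Irreducible f) (hdeg : f.degree ≠ 1) {x : L}
    (hx : aeval x f = 0) : x ^ p ≠ x := by
  have : CharP L p := charP_of_injective_algebraMap (algebraMap (ZMod p) L).injective p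
  intro hfix
  obtain ⟨n, rfl⟩ := (mem_bot_iff_intCast p L).1 ((Subfield.mem_bot_iff_pow_eq_self L p).2 hfix)
  rw [← map_intCast (algebraMap (ZMod p) L), aeval_algebraMap_apply,
    FaithfulSMul.algebraMap_eq_zero_iff] at hx
  exact hdeg (degree_eq_one_of_irreducible_of_root hf hx)

theorem frobenius_orbit_of_irreducible [Finite L] (hcard : Nat.card L = p ^ 3)
    (hf : Irreducible f) (hdeg : f.degree ≠ 1) {x : L} (hx : aeval x f = 0) :
    aeval (x ^ p) f = 0 ∧ aeval ((x ^ p) ^ p) f = 0 ∧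
      x ≠ x ^ p ∧ x ≠ (x ^ p) ^ p ∧ x ^ p ≠ (x ^ p) ^ p := by
  have hroot : ∀ {y : L}, aeval y f = 0 → aeval (y ^ p) f = 0 := fun hy => by
    rw [aeval_pow_char_eq_pow, hy, zero_pow hp.out.ne_zero]
  have hne : ∀ {y : L}, aeval y f = 0 → y ^ p ≠ y := pow_char_ne_self_of_irreducible hf hdeg
  refine ⟨hroot hx, hroot (hroot hx), (hne hx).symm, fun h => hne hx ?_, (hne (hroot hx)).symm⟩
  calc x ^ p = ((x ^ p) ^ p) ^ p := by rw [← h]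
    _ = x := pow_pow_pow_eq_self_of_natCard_eq hcard x

end Frobenius

/-- **Theorem 2.** If `x^3 + a x + b` is irreducible over `GF(p)` (with `p ≥ 5` prime,
`a ≠ 0`), and `X^p ≡ c₂ X² + c₁ X + c₀ (mod f)`, then `c₂ ≠ 0` and
`t = 3a · c₂⁻¹` satisfies `t² = -(4a³ + 27b²)`. -/
theorem gfp3_sqrt_depressed_cubic (p : ℕ) (hp : p.Prime) (hp5 : 5 ≤ p)
    (a b : ZMod p) (ha : a ≠ 0)
    (f : (ZMod p)[X]) (hf : f = X ^ 3 + C a * X + C b)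
    (hirr : Irreducible f)
    (c₀ c₁ c₂ : ZMod p)
    (hrem : (X : (ZMod p)[X]) ^ p %ₘ f = C c₂ * X ^ 2 + C c₁ * X + C c₀) :
    c₂ ≠ 0 ∧ (3 * a * c₂⁻¹) ^ 2 = -(4 * a ^ 3 + 27 * b ^ 2) := by
  have : Fact p.Prime := ⟨hp⟩
  have : Fact (Irreducible f) := ⟨hirr⟩
  have : Finite (AdjoinRoot f) := AdjoinRoot.finite_of_finite hirr.ne_zero
  have hdeg : f.degree = 3 := by rw [hf]; compute_degree!
  have hcard : Nat.card (AdjoinRoot f) = p ^ 3 := by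
    rw [AdjoinRoot.natCard_eq_pow_natDegree hirr.ne_zero, Nat.card_zmod,
      natDegree_eq_of_degree_eq_some hdeg]
  set φ := AdjoinRoot.of f
  set α := AdjoinRoot.root f
  have hα : aeval α f = 0 := by rw [AdjoinRoot.aeval_eq, AdjoinRoot.mk_self]
  obtain ⟨hβ, hγ, hαβ, hαγ, hβγ⟩ :=
    frobenius_orbit_of_irreducible hcard hirr (by rw [hdeg]; decide) hα
  set β := α ^ p
  set γ := β ^ p
  have hcubic : ∀ {x}, aeval x f = 0 → x ^ 3 + φ a * x + φ b = 0 := fun hx => by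
    simpa [hf] using hx
  have hfrob : ∀ {x}, aeval x f = 0 → φ c₂ * x ^ 2 + φ c₁ * x + φ c₀ = x ^ p := fun hx => by
    simpa [hrem] using aeval_modByMonic_eq_self_of_root (p := X ^ p) hx
  have h3 : (3 : ZMod p) ≠ 0 := fun h => by
    simpa [h] using ZMod.val_ofNat_of_lt (n := p) (a := 3) (by omega)
  have h3a : φ (3 * a) ≠ 0 := (map_ne_zero φ).2 (mul_ne_zero h3 ha)
  obtain ⟨hc₂, hsq⟩ := depressed_cubic_disc_eq_sq_of_cyclic_quadratic
    (by simpa only [map_mul, map_ofNat] using h3a)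
    (hcubic hα) (hcubic hβ) (hcubic hγ) hαβ hαγ hβγ (hfrob hα) (hfrob hβ)
    ((hfrob hγ).trans (pow_pow_pow_eq_self_of_natCard_eq hcard α))
  refine ⟨fun h => hc₂ (by rw [h, map_zero]), φ.injective ?_⟩
  simpa only [map_pow, map_mul, map_inv₀, map_neg, map_add, map_ofNat] using hsq
end

section
/- Let $p \ge 5$ be a prime and let $b, c, d \in \mathrm{GF}(p)$ with $b^2 - 3c \ne 0$. Suppose the cubic polynomial $f(X) = X^3 + bX^2 + cX + d$ is irreducible over $\mathrm{GF}(p)$, and write $X^p \equiv c_2 X^2 + c_1 X + c_0 \pmod{f(X)}$ for coefficients $c_0, c_1, c_2 \in \mathrm{GF}(p)$. Then $c_2 \ne 0$, and the element $t = (b^2 - 3c) \cdot c_2^{-1}$ satisfies $t^2 = (18bcd - 4b^3 d + b^2 c^2) - (4c^3 + 27d^2)$ in $\mathrm{GF}(p)$. -/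
open Polynomial

/-!
Let `α` be the root of `f` in `K = GF(p)[X]/(f) ≅ GF(p³)` and `σ` the Frobenius `x ↦ x ^ p`,
which has order `3` on `K`. Since `α` generates `K`, neither `σ` nor `σ²` fixes `α`, so the roots
of `f` are the distinct elements `α`, `β = σ α`, `γ = σ β`, and with `q = c₂ X² + c₁ X + c₀`
we have `β = q(α)`, `γ = q(β)`, `α = q(γ)`. Eliminating `c₀` and `c₁` from these three relations
gives `c₂ (α - β)(β - γ)(γ - α) = -(b² - 3c)`, and `((α - β)(β - γ)(γ - α))²` is the discriminant.
-/

theorem quadratic_three_cycle_identity {R : Type*} [CommRing R] {a₀ a₁ a₂ x y z : R}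
    (hy : y = a₂ * x ^ 2 + a₁ * x + a₀) (hz : z = a₂ * y ^ 2 + a₁ * y + a₀)
    (hx : x = a₂ * z ^ 2 + a₁ * z + a₀) :
    a₂ * ((x - y) * (y - z) * (z - x)) = -((x + y + z) ^ 2 - 3 * (x * y + x * z + y * z)) := by
  linear_combination (y - z) * hy - (x - z) * hz + (x - y) * hx

theorem Polynomial.roots_eq_of_natDegree_eq_three {R : Type*} [CommRing R] [IsDomain R]
    {g : R[X]} (hg : g.natDegree = 3) {x y z : R} (hxy : x ≠ y) (hxz : x ≠ z) (hyz : y ≠ z)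
    (hx : g.IsRoot x) (hy : g.IsRoot y) (hz : g.IsRoot z) : g.roots = {x, y, z} := by
  have hg0 : g ≠ 0 := ne_zero_of_natDegree_gt (n := 0) (by omega)
  symm
  refine Multiset.eq_of_le_of_card_le ?_ (by simpa [hg] using card_roots' g)
  rw [Multiset.le_iff_subset (by simp [hxy, hxz, hyz])]
  intro w hw
  simp only [Multiset.insert_eq_cons, Multiset.mem_cons, Multiset.mem_singleton] at hw
  rcases hw with rfl | rfl | rfl <;> simpa [mem_roots hg0]

namespace Cubic

variable {F K : Type*} [Field F] [Field K] {φ : F →+* K} {P : Cubic F} {x y z : K}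

theorem sq_mul_inv_eq_discr_of_roots_quadratic_cycle (ha : P.a = 1)
    (h3 : (P.map φ).roots = {x, y, z}) {a₀ a₁ a₂ : F}
    (hy : y = φ a₂ * x ^ 2 + φ a₁ * x + φ a₀) (hz : z = φ a₂ * y ^ 2 + φ a₁ * y + φ a₀)
    (hx : x = φ a₂ * z ^ 2 + φ a₁ * z + φ a₀) (hbc : P.b ^ 2 - 3 * P.c ≠ 0) :
    a₂ ≠ 0 ∧ ((P.b ^ 2 - 3 * P.c) * a₂⁻¹) ^ 2 = P.discr := by
  have ha₀ : P.a ≠ 0 := ha ▸ one_ne_zero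
  have hkey : φ (P.b ^ 2 - 3 * P.c) = -(φ a₂ * ((x - y) * (y - z) * (z - x))) := by
    rw [quadratic_three_cycle_identity hy hz hx]
    simp only [map_sub, map_pow, map_mul, map_ofNat, b_eq_three_roots ha₀ h3,
      c_eq_three_roots ha₀ h3, ha, map_one]
    ring
  have ha₂ : a₂ ≠ 0 := by
    rintro rfl
    exact hbc (φ.injective (by simp [hkey]))
  refine ⟨ha₂, φ.injective ?_⟩
  rw [discr_eq_prod_three_roots ha₀ h3, map_pow, map_mul, hkey, map_inv₀, ha, map_one]
  field_simp [(map_ne_zero φ).2 ha₂]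
  ring

end Cubic

namespace AdjoinRoot

theorem orderOf_dvd_of_pow_apply_root {R : Type*} [CommRing R] {g : R[X]}
    {σ : AdjoinRoot g →ₐ[R] AdjoinRoot g} {n : ℕ} (h : (σ ^ n) (root g) = root g) :
    orderOf σ ∣ n :=
  orderOf_dvd_of_pow_eq_one (algHom_ext (by simpa using h))

variable {k : Type*} [Field k] {f : k[X]} [Fact (Irreducible f)]

theorem roots_map_eq_orbit_of_orderOf_eq_three (hdeg : f.natDegree = 3)
    {σ : AdjoinRoot f →ₐ[k] AdjoinRoot f} (hσ : orderOf σ = 3) :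
    (f.map (algebraMap k (AdjoinRoot f))).roots = {root f, σ (root f), σ (σ (root f))} := by
  have hσroot : ∀ y : AdjoinRoot f, aeval y f = 0 → aeval (σ y) f = 0 := by
    intro y hy; rw [aeval_algHom_apply, hy, map_zero]
  have h₁ : σ (root f) ≠ root f := fun h => by
    simpa [hσ] using orderOf_dvd_of_pow_apply_root (σ := σ) (n := 1) (by simpa using h)
  have h₂ : σ (σ (root f)) ≠ root f := fun h => by
    simpa [hσ] using orderOf_dvd_of_pow_apply_root (σ := σ) (n := 2) (by simpa [pow_two] using h)
  have hα : aeval (root f) f = 0 := by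
    rw [← eval_map_algebraMap, algebraMap_eq]; exact isRoot_root f
  have hinj : Function.Injective σ := σ.toRingHom.injective
  refine roots_eq_of_natDegree_eq_three (by rwa [natDegree_map]) (Ne.symm h₁) (Ne.symm h₂)
    (fun h => h₁ (hinj h.symm)) ?_ ?_ ?_ <;>
    rw [IsRoot, eval_map_algebraMap]
  exacts [hα, hσroot _ hα, hσroot _ (hσroot _ hα)]

theorem orderOf_frobeniusAlgHom [Fintype k] :
    orderOf (FiniteField.frobeniusAlgHom k (AdjoinRoot f)) = f.natDegree := by
  have hf0 : f ≠ 0 := (Fact.out : Irreducible f).ne_zero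
  have := (powerBasis hf0).finite
  have := Module.finite_of_finite k (M := AdjoinRoot f)
  rw [FiniteField.orderOf_frobeniusAlgHom, (powerBasis hf0).finrank, powerBasis_dim]

end AdjoinRoot

theorem FiniteField.frobeniusAlgHom_apply_eq_aeval_modByMonic {k L : Type*} [Field k] [Fintype k]
    [CommRing L] [Algebra k L] {f : k[X]} {y : L} (hy : aeval y f = 0) :
    frobeniusAlgHom k L y = aeval y (X ^ Fintype.card k %ₘ f) := by
  rw [aeval_modByMonic_eq_self_of_root hy, coe_frobeniusAlgHom, map_pow, aeval_X]

theorem gfp3_sqrt_general_cubic_general (p : ℕ) (hp : p.Prime)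
    (b c d : ZMod p) (hbc : b ^ 2 - 3 * c ≠ 0)
    (f : (ZMod p)[X]) (hf : f = X ^ 3 + C b * X ^ 2 + C c * X + C d)
    (hirr : Irreducible f)
    (c₀ c₁ c₂ : ZMod p)
    (hrem : (X : (ZMod p)[X]) ^ p %ₘ f = C c₂ * X ^ 2 + C c₁ * X + C c₀) :
    c₂ ≠ 0 ∧ ((b ^ 2 - 3 * c) * c₂⁻¹) ^ 2
      = (18 * b * c * d - 4 * b ^ 3 * d + b ^ 2 * c ^ 2) - (4 * c ^ 3 + 27 * d ^ 2) := by
  have := Fact.mk hp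
  have := Fact.mk hirr
  let σ := FiniteField.frobeniusAlgHom (ZMod p) (AdjoinRoot f)
  let α := AdjoinRoot.root f
  have hdeg : f.natDegree = 3 := by rw [hf]; compute_degree!
  have hord : orderOf σ = 3 := AdjoinRoot.orderOf_frobeniusAlgHom.trans hdeg
  have hroots := AdjoinRoot.roots_map_eq_orbit_of_orderOf_eq_three hdeg hord
  have hσ (y : AdjoinRoot f) (hy : y ∈ ({α, σ α, σ (σ α)} : Multiset (AdjoinRoot f))) :
      σ y = algebraMap _ _ c₂ * y ^ 2 + algebraMap _ _ c₁ * y + algebraMap _ _ c₀ := by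
    rw [← hroots, mem_roots (map_ne_zero hirr.ne_zero), IsRoot, eval_map_algebraMap] at hy
    rw [FiniteField.frobeniusAlgHom_apply_eq_aeval_modByMonic hy, ZMod.card, hrem]
    simp
  have hσ3 : σ (σ (σ α)) = α := by
    have h := pow_orderOf_eq_one σ
    rw [hord] at h
    simpa [pow_succ] using DFunLike.congr_fun h α
  let P : Cubic (ZMod p) := ⟨1, b, c, d⟩
  have hP : P.toPoly = f := by simp [P, Cubic.toPoly, hf]
  have h3 : (P.map (algebraMap (ZMod p) (AdjoinRoot f))).roots = {α, σ α, σ (σ α)} := by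
    rw [Cubic.map_roots, hP, hroots]
  have hx := hσ3 ▸ hσ (σ (σ α)) (by simp)
  obtain ⟨hc₂, ht⟩ := Cubic.sq_mul_inv_eq_discr_of_roots_quadratic_cycle (P := P) rfl h3
    (hσ α (by simp)) (hσ (σ α) (by simp)) hx hbc
  refine ⟨hc₂, ht.trans ?_⟩
  simp only [Cubic.discr, P]
  ring

/-- **Theorem 3.** If `x³ + b x² + c x + d` is irreducible over `GF(p)` (with `p ≥ 5` prime,
`b² - 3c ≠ 0`), and `X^p ≡ c₂ X² + c₁ X + c₀ (mod f)`, then `c₂ ≠ 0` and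
`t = (b² - 3c) · c₂⁻¹` satisfies `t² = (18bcd - 4b³d + b²c²) - (4c³ + 27d²)`. -/
theorem gfp3_sqrt_general_cubic (p : ℕ) (hp : p.Prime) (hp5 : 5 ≤ p)
    (b c d : ZMod p) (hbc : b ^ 2 - 3 * c ≠ 0)
    (f : (ZMod p)[X]) (hf : f = X ^ 3 + C b * X ^ 2 + C c * X + C d)
    (hirr : Irreducible f)
    (c₀ c₁ c₂ : ZMod p)
    (hrem : (X : (ZMod p)[X]) ^ p %ₘ f = C c₂ * X ^ 2 + C c₁ * X + C c₀) :
    c₂ ≠ 0 ∧ ((b ^ 2 - 3 * c) * c₂⁻¹) ^ 2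
      = (18 * b * c * d - 4 * b ^ 3 * d + b ^ 2 * c ^ 2) - (4 * c ^ 3 + 27 * d ^ 2) :=
  gfp3_sqrt_general_cubic_general p hp b c d hbc f hf hirr c₀ c₁ c₂ hrem
end

section
/- Let $p$ be a prime, let $g$ be an integer with $\gcd(g,p) = 1$, and let $n$ be the multiplicative order of $g$ modulo $p$. Assume $n \not\equiv 2 \pmod 4$. Let $a$ be an integer and set $h \equiv g^a \pmod p$. Then $Q(g, 1, p) \equiv g^{a^2} \cdot Q(g, h^2, p) \pmod p$, where $Q(g, h, p) = \sum_{k=1}^{p-1} g^{k^2} h^k \pmod p$. -/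
/-!
Completing the square, `g^{a²} g^{k²} (g^a)^{2k} = g^{(k+a)²}`, turns `g^{a²} Q(g,h²,p)` into the
sum of `g^{(k+a)²}` over `1 ≤ k ≤ p - 1`. By Fermat, `k ↦ g^{k²}` has period `p - 1`, so this
shifted sum over a full period equals the unshifted one, which is `Q(g,1,p)`.
-/

/-- The quadratic sum `Q(g,h,p) = ∑_{k=1}^{p-1} g^{k²} h^k (mod p)`. -/
def quadSum (p : ℕ) (g h : ℤ) : ZMod p :=
  ∑ k ∈ Finset.Icc 1 (p - 1), (g : ZMod p) ^ (k ^ 2) * (h : ZMod p) ^ k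

open Finset Function

theorem Function.Periodic.sum_Ico_eq_sum_range {M : Type*} [AddCommMonoid M] {f : ℕ → M}
    {m : ℕ} (hf : Periodic f m) (n : ℕ) :
    ∑ k ∈ Ico n (n + m), f k = ∑ k ∈ range m, f k := by
  simp only [Finset.sum_eq_multiset_sum, Finset.range_val, ← Nat.multiset_Ico_map_mod n m,
    Multiset.map_map, comp_def, hf.map_mod_nat]
  rfl

theorem Function.Periodic.sum_Icc_one_add_eq_sum_range {M : Type*} [AddCommMonoid M]
    {f : ℕ → M} {m : ℕ} (hf : Periodic f m) (c : ℕ) :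
    ∑ k ∈ Icc 1 m, f (k + c) = ∑ k ∈ range m, f k := by
  rw [← Finset.Ico_add_one_right_eq_Icc, sum_Ico_add',
    show m + 1 + c = 1 + c + m by ring, hf.sum_Ico_eq_sum_range]

theorem periodic_pow_sq {M : Type*} [Monoid M] {x : M} {m : ℕ} (hx : x ^ m = 1) :
    Periodic (fun k : ℕ ↦ x ^ k ^ 2) m := fun k ↦ by
  dsimp only
  rw [show (k + m) ^ 2 = k ^ 2 + m * (2 * k + m) by ring, pow_add, pow_mul, hx, one_pow, mul_one]

theorem pow_sq_mul_quadSum_sq_eq_sum {p : ℕ} {g h : ℤ} {a : ℕ}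
    (hh : (h : ZMod p) = (g : ZMod p) ^ a) :
    (g : ZMod p) ^ (a ^ 2) * quadSum p g (h ^ 2) =
      ∑ k ∈ Icc 1 (p - 1), (g : ZMod p) ^ (k + a) ^ 2 := by
  rw [quadSum, mul_sum]
  refine sum_congr rfl fun k _ ↦ ?_
  rw [Int.cast_pow, hh, ← pow_mul, ← pow_mul, ← pow_add, ← pow_add]
  ring_nf

theorem quadSum_diffie_hellman_general (p : ℕ) (hp : p.Prime) (g : ℤ) (hg : Int.gcd g p = 1)
    (a : ℕ) (h : ℤ) (hh : (h : ZMod p) = (g : ZMod p) ^ a) :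
    quadSum p g 1 = (g : ZMod p) ^ (a ^ 2) * quadSum p g (h ^ 2) := by
  have := Fact.mk hp
  have hper := periodic_pow_sq (ZMod.pow_card_sub_one_eq_one (ZMod.ne_zero_of_gcd_eq_one hp hg))
  have hQ1 : quadSum p g 1 = ∑ k ∈ Icc 1 (p - 1), (g : ZMod p) ^ (k + 0) ^ 2 := by
    simpa using pow_sq_mul_quadSum_sq_eq_sum (p := p) (g := g) (h := 1) (a := 0) (by simp)
  rw [hQ1, pow_sq_mul_quadSum_sq_eq_sum hh, hper.sum_Icc_one_add_eq_sum_range,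
    hper.sum_Icc_one_add_eq_sum_range]

/-- **Theorem 1.** If `n` is the multiplicative order of `g` mod `p`, `n ≢ 2 (mod 4)`,
and `h ≡ g^a (mod p)`, then `g^{a²} ≡ Q(g,1,p) · Q(g,h²,p)⁻¹ (mod p)`, i.e.
`Q(g,1,p) ≡ g^{a²} · Q(g,h²,p) (mod p)`. -/
theorem quadSum_diffie_hellman (p : ℕ) (hp : p.Prime) (g : ℤ) (hg : Int.gcd g p = 1)
    (n : ℕ) (hn : n = orderOf ((g : ZMod p))) (hn4 : n % 4 ≠ 2)
    (a : ℕ) (h : ℤ) (hh : (h : ZMod p) = (g : ZMod p) ^ a) :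
    quadSum p g 1 = (g : ZMod p) ^ (a ^ 2) * quadSum p g (h ^ 2) :=
  quadSum_diffie_hellman_general p hp g hg a h hh
end

section
/- Let $p$ be a prime, let $g$ be an integer with $\gcd(g,p)=1$, and let $n$ be the multiplicative order of $g$ modulo $p$. If $n \equiv 2 \pmod 4$, then $Q(g,p) \equiv 0 \pmod p$, where $Q(g,p) = \sum_{k=1}^{n} g^{k^2} \pmod p$. -/
/-!
Write `n = 2m` with `m` odd and `u = g mod p`. Since `u` has order `2m` in the field `ZMod p`,
`u ^ m = -1`. Then `(k + m)² = k² + 2mk + m²` gives `u ^ (k + m)² = u ^ k² · (-1) ^ m = -u ^ k²`,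
so the terms of the second half of the sum cancel those of the first half.
-/

/-- The quadratic Gauss-type sum `Q(g,p) = ∑_{k=1}^{n} g^{k²} (mod p)`, where `n` is the
multiplicative order of `g` modulo `p`. -/
def quadGaussSum (p : ℕ) (g : ℤ) (n : ℕ) : ZMod p :=
  ∑ k ∈ Finset.Icc 1 n, (g : ZMod p) ^ (k ^ 2)

open Finset Function

theorem pow_eq_neg_one_of_orderOf_eq_two_mul {R : Type*} [Ring R] [NoZeroDivisors R] {u : R}
    {m : ℕ} (hu : orderOf u = 2 * m) (hm : m ≠ 0) : u ^ m = -1 := by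
  have h2 : orderOf (u ^ m) = 2 := by
    rw [orderOf_pow_of_dvd hm (hu ▸ dvd_mul_left m 2), hu,
      Nat.mul_div_cancel _ (Nat.pos_of_ne_zero hm)]
  have := Fact.mk Nat.prime_two
  obtain ⟨hsq, hne⟩ := orderOf_eq_prime_iff.mp h2
  exact (sq_eq_one_iff.mp hsq).resolve_left hne

theorem antiperiodic_pow_sq {M : Type*} [Monoid M] [HasDistribNeg M] {u : M} {m : ℕ}
    (hu : u ^ m = -1) (hm : Odd m) : Antiperiodic (fun k : ℕ ↦ u ^ (k ^ 2)) m := by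
  intro k
  calc u ^ ((k + m) ^ 2) = u ^ (k ^ 2) * ((u ^ m) ^ 2) ^ k * (u ^ m) ^ m := by
        rw [← pow_mul, ← pow_mul, ← pow_add, ← pow_mul, ← pow_add]; ring_nf
    _ = -u ^ (k ^ 2) := by simp [hu, hm.neg_one_pow]

theorem Function.Antiperiodic.sum_range_two_mul_eq_zero {M : Type*} [AddCommGroup M]
    {f : ℕ → M} {m : ℕ} (h : Antiperiodic f m) : ∑ k ∈ range (2 * m), f k = 0 := by
  rw [two_mul, sum_range_add, ← sum_add_distrib]
  exact sum_eq_zero fun k _ ↦ by rw [add_comm m, h, add_neg_cancel]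

theorem quadGaussSum_eq_zero_of_order_two_mod_four_general (p : ℕ) (hp : p.Prime)
    (g : ℤ)
    (n : ℕ) (hn : n = orderOf ((g : ZMod p))) (hn4 : n % 4 = 2) :
    quadGaussSum p g n = 0 := by
  have := Fact.mk hp
  obtain ⟨m, rfl, hm⟩ : ∃ m, n = 2 * m ∧ Odd m := ⟨n / 2, by omega, Nat.odd_iff.mpr (by omega)⟩
  have hgm : (g : ZMod p) ^ m = -1 := pow_eq_neg_one_of_orderOf_eq_two_mul hn.symm hm.pos.ne'
  rw [quadGaussSum, ← Ico_add_one_right_eq_Icc, sum_Ico_eq_sum_range, Nat.add_sub_cancel]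
  exact ((antiperiodic_pow_sq hgm hm).const_add 1).sum_range_two_mul_eq_zero

/-- If `n`, the multiplicative order of `g` mod `p`, satisfies `n ≡ 2 (mod 4)`,
then `Q(g,p) ≡ 0 (mod p)`. -/
theorem quadGaussSum_eq_zero_of_order_two_mod_four (p : ℕ) (hp : p.Prime)
    (g : ℤ) (hg : Int.gcd g p = 1)
    (n : ℕ) (hn : n = orderOf ((g : ZMod p))) (hn4 : n % 4 = 2) :
    quadGaussSum p g n = 0 :=
  quadGaussSum_eq_zero_of_order_two_mod_four_general p hp g n hn hn4
end

section
/- Let $p$ be an odd prime, let $b, c \in \mathrm{GF}(p)$ with $c$ a nonzero square in $\mathrm{GF}(p)$, and suppose $f(X) = X^2 - bX + c$ is irreducible over $\mathrm{GF}(p)$. Let $x$ denote the image of $X$ in the field $\mathrm{GF}(p)[X]/\langle f \rangle \cong \mathrm{GF}(p^2)$. Then there exists $y \in \mathrm{GF}(p)$ such that $x^{(p+1)/2}$ equals the image of $y$ in $\mathrm{GF}(p)[X]/\langle f \rangle$ and $y^2 = c$ in $\mathrm{GF}(p)$; that is, $x^{(p+1)/2}$ is a constant whose value is a square root of $c$ modulo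 $p$. -/
open Polynomial

/-- **Cipolla–Lehmer correctness.** For an odd prime `p` and an irreducible quadratic
`f = X² - bX + c` over `GF(p)` with `c` a nonzero square, the element
`x^((p+1)/2)` in `GF(p)[X]/⟨f⟩` is a constant `y ∈ GF(p)` with `y² = c`. -/
theorem cipolla_lehmer_correct (p : ℕ) (hp : p.Prime) (hodd : Odd p)
    (b c : ZMod p) (hc : IsSquare c) (hc0 : c ≠ 0)
    (f : (ZMod p)[X]) (hf : f = X ^ 2 - C b * X + C c)
    (hirr : Irreducible f) :
    ∃ y : ZMod p, (AdjoinRoot.root f) ^ ((p + 1) / 2) = AdjoinRoot.of f y ∧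
      y ^ 2 = c := by
  classical
  haveI := Fact.mk hp
  haveI := Fact.mk hirr
  set K := AdjoinRoot f with hK
  set x : K := AdjoinRoot.root f with hxdef
  set φ : ZMod p →+* K := AdjoinRoot.of f with hφ
  haveI : CharP K p := charP_of_injective_ringHom φ.injective p
  have hφalg : ∀ a : ZMod p, φ a = algebraMap (ZMod p) K a := fun a => rfl
  -- x satisfies the quadratic relation
  have haev : aeval x f = 0 := by
    rw [hxdef, AdjoinRoot.aeval_eq, AdjoinRoot.mk_self]
  have h0 : x ^ 2 + φ c = φ b * x := by
    have h : aeval x (X ^ 2 - C b * X + C c) = 0 := by rw [← hf]; exact haev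
    simp only [map_add, map_sub, map_pow, map_mul, aeval_X, aeval_C] at h
    rw [← hφalg, ← hφalg] at h
    linear_combination h
  -- degree facts
  have hfdeg : f.natDegree = 2 := by
    rw [hf]; compute_degree!
  -- x is not in the image of φ
  have hximg : ∀ a : ZMod p, x ≠ φ a := by
    intro a hxa
    have hroot : f.eval a = 0 := by
      have h2 : aeval (algebraMap (ZMod p) K a) f = 0 := by
        rw [← hφalg, ← hxa]; exact haev
      rw [aeval_algebraMap_apply_eq_algebraMap_eval] at h2
      exact (map_eq_zero_iff (algebraMap (ZMod p) K)
        (RingHom.injective _)).mp h2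
    have hdvd : (X - C a) ∣ f := dvd_iff_isRoot.mpr hroot
    obtain ⟨g, hg⟩ := hdvd
    rcases hirr.isUnit_or_isUnit hg with hu | hu
    · exact Polynomial.not_isUnit_X_sub_C a hu
    · have hg0 : g ≠ 0 := fun h => by
        simp [h] at hg
        rw [hg] at hfdeg
        simp at hfdeg
      have : g.natDegree = 0 := natDegree_eq_zero_of_isUnit hu
      have : f.natDegree = 1 := by
        rw [hg, natDegree_mul (X_sub_C_ne_zero a) hg0, natDegree_X_sub_C, this]
      omega
  -- x^p ≠ x (else p+1 roots of X^p - X)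
  have hfrob : x ^ p ≠ x := by
    intro hxx
    have hS : ∀ t ∈ insert x ((Finset.univ : Finset (ZMod p)).image φ),
        t ∈ (X ^ p - X : K[X]).roots := by
      intro t ht
      have hne : (X ^ p - X : K[X]) ≠ 0 :=
        FiniteField.X_pow_card_sub_X_ne_zero K hp.one_lt
      rw [mem_roots hne]
      rcases Finset.mem_insert.mp ht with rfl | ht
      · simp [IsRoot, hxx]
      · obtain ⟨a, _, rfl⟩ := Finset.mem_image.mp ht
        have : φ a ^ p = φ a := by rw [← map_pow, ZMod.pow_card]
        simp [IsRoot, this]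
    have hcard : (insert x ((Finset.univ : Finset (ZMod p)).image φ)).card
        ≤ (X ^ p - X : K[X]).natDegree := by
      apply card_le_degree_of_subset_roots
      intro t ht
      exact (Multiset.mem_toFinset.mpr (hS t (by simpa using ht)) : t ∈ (X ^ p - X : K[X]).roots.toFinset) |> Multiset.mem_toFinset.mp
    rw [FiniteField.X_pow_card_sub_X_natDegree_eq K hp.one_lt] at hcard
    have himg : ((Finset.univ : Finset (ZMod p)).image φ).card = p := by
      rw [Finset.card_image_of_injective _ φ.injective, Finset.card_univ, ZMod.card]
    rw [Finset.card_insert_of_notMem (by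
      intro hmem
      obtain ⟨a, _, ha⟩ := Finset.mem_image.mp hmem
      exact hximg a ha.symm), himg] at hcard
    omega
  -- x^p is also a root of the quadratic
  have hxp : (x ^ p) ^ 2 + φ c = φ b * (x ^ p) := by
    have h := congrArg (fun t => t ^ p) h0
    rw [add_pow_char, mul_pow, ← pow_mul, ← map_pow, ← map_pow, ZMod.pow_card,
      ZMod.pow_card, mul_comm 2 p, pow_mul] at h
    exact h
  have hfactor : (x ^ p - x) * (x ^ p - (φ b - x)) = 0 := by
    linear_combination hxp - h0
  have hconj : x ^ p = φ b - x := by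
    rcases mul_eq_zero.mp hfactor with h | h
    · exact absurd (sub_eq_zero.mp h) hfrob
    · exact sub_eq_zero.mp h
  -- x^(p+1) = φ c
  have hnorm : x ^ (p + 1) = φ c := by
    rw [pow_succ, hconj]
    linear_combination -h0
  obtain ⟨y, hy⟩ := hc
  have hy2 : y ^ 2 = c := by rw [hy]; ring
  have hsq : (x ^ ((p + 1) / 2)) ^ 2 = φ c := by
    rw [← pow_mul, ← hnorm]
    congr 1
    obtain ⟨k, hk⟩ := hodd
    omega
  have hfac2 : (x ^ ((p + 1) / 2) - φ y) * (x ^ ((p + 1) / 2) + φ y) = 0 := by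
    have : φ y ^ 2 = φ c := by rw [← map_pow, hy2]
    linear_combination hsq - this
  rcases mul_eq_zero.mp hfac2 with h | h
  · exact ⟨y, sub_eq_zero.mp h, hy2⟩
  · refine ⟨-y, ?_, by rw [neg_pow, hy2]; ring⟩
    rw [map_neg]
    linear_combination h
end

section
/- Let $p \ge 5$ be a prime, let $a, b \in \mathrm{GF}(p)$ with $a \ne 0$, and suppose $f(X) = X^3 + aX + b$ is irreducible over $\mathrm{GF}(p)$. Then $g(X) = X^3 + aX - b$ is also irreducible over $\mathrm{GF}(p)$, and if $X^p \equiv c_2 X^2 + c_1 X + c_0 \pmod{f(X)}$ and $X^p \equiv c_2' X^2 + c_1' X + c_0' \pmod{g(X)}$, then $c_2' = -c_2$, $c_1' = c_1$, and $c_0' = -c_0$; in particular $3a \cdot (c_2')^{-1} = -\left(3a \cdot c_2^{-1}\right)$, so the square roots of the discriminant produced by the two polynomials are negatives of each other. -/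
/-!
The substitution `X ↦ -X` is a ring automorphism of `GF(p)[X]` sending `f = X³ + aX + b` to
`-g`, so it carries irreducibility of `f` to that of `g` and reduction modulo `f` to reduction
modulo `g`. Since `p` is odd it sends `X^p` to `-X^p`, hence `X^p mod g` is minus the reflection
of `X^p mod f`, which negates the even coefficients `c₂, c₀` and keeps `c₁`.
-/

open Polynomial

namespace Polynomial

variable {R : Type*} [CommRing R]

theorem irreducible_comp_neg_X_iff {f : R[X]} : Irreducible (f.comp (-X)) ↔ Irreducible f :=
  MulEquiv.irreducible_iff (f := (algEquivAevalNegX : R[X] ≃ₐ[R] R[X]))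

theorem irreducible_of_comp_neg_X_eq_neg {f g : R[X]} (hfg : f.comp (-X) = -g)
    (hf : Irreducible f) : Irreducible g := by
  have hneg : Irreducible (-g) := hfg ▸ irreducible_comp_neg_X_iff.2 hf
  exact (Associated.refl g).neg_left.irreducible hneg

theorem comp_neg_X_modByMonic_of_comp_neg_X_eq_neg [Nontrivial R] {f g : R[X]}
    (hf : f.Monic) (hg : g.Monic) (hfg : f.comp (-X) = -g) (q : R[X]) :
    q.comp (-X) %ₘ g = (q %ₘ f).comp (-X) := by
  have hdvd : g ∣ q.comp (-X) - (q %ₘ f).comp (-X) := by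
    rw [← sub_comp, ← eq_sub_of_add_eq' (modByMonic_add_div q f), mul_comp, hfg]
    exact (dvd_neg.2 dvd_rfl).mul_right _
  have hdeg : g.degree = f.degree := by rw [← degree_neg, ← hfg, degree_comp_neg_X]
  rw [modByMonic_eq_of_dvd_sub hg hdvd, modByMonic_eq_self_iff hg, degree_comp_neg_X, hdeg]
  exact degree_modByMonic_lt q hf

theorem X_pow_modByMonic_of_comp_neg_X_eq_neg [Nontrivial R] {f g : R[X]}
    (hf : f.Monic) (hg : g.Monic) (hfg : f.comp (-X) = -g) {n : ℕ} (hn : Odd n) :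
    X ^ n %ₘ g = -((X ^ n %ₘ f).comp (-X)) := by
  rw [← comp_neg_X_modByMonic_of_comp_neg_X_eq_neg hf hg hfg, X_pow_comp, hn.neg_pow,
    neg_modByMonic, neg_neg]

theorem depressedCubic_comp_neg_X (a b : R) :
    (X ^ 3 + C a * X + C b).comp (-X) = -(X ^ 3 + C a * X - C b) := by
  simp only [add_comp, mul_comp, X_pow_comp, X_comp, C_comp]
  ring

theorem quadratic_comp_neg_X (c₀ c₁ c₂ : R) :
    (C c₂ * X ^ 2 + C c₁ * X + C c₀).comp (-X) = C c₂ * X ^ 2 - C c₁ * X + C c₀ := by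
  simp only [add_comp, mul_comp, X_pow_comp, X_comp, C_comp]
  ring

theorem quadratic_eq_quadratic_iff {a₀ a₁ a₂ b₀ b₁ b₂ : R} :
    C a₂ * X ^ 2 + C a₁ * X + C a₀ = C b₂ * X ^ 2 + C b₁ * X + C b₀ ↔
      a₂ = b₂ ∧ a₁ = b₁ ∧ a₀ = b₀ := by
  refine ⟨fun h ↦ ⟨?_, ?_, ?_⟩, by rintro ⟨rfl, rfl, rfl⟩; rfl⟩
  · simpa [coeff_X, coeff_C] using congrArg (coeff · 2) h
  · simpa [coeff_X, coeff_C] using congrArg (coeff · 1) h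
  · simpa [coeff_X, coeff_C] using congrArg (coeff · 0) h

end Polynomial

theorem gfp3_sqrt_neg_b_general (p : ℕ) (hp : p.Prime) (hp5 : 5 ≤ p)
    (a b : ZMod p)
    (f g : (ZMod p)[X])
    (hf : f = X ^ 3 + C a * X + C b) (hg : g = X ^ 3 + C a * X - C b)
    (hirr : Irreducible f)
    (c₀ c₁ c₂ c₀' c₁' c₂' : ZMod p)
    (hremf : (X : (ZMod p)[X]) ^ p %ₘ f = C c₂ * X ^ 2 + C c₁ * X + C c₀)
    (hremg : (X : (ZMod p)[X]) ^ p %ₘ g = C c₂' * X ^ 2 + C c₁' * X + C c₀') :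
    Irreducible g ∧ c₂' = -c₂ ∧ c₁' = c₁ ∧ c₀' = -c₀ ∧
      3 * a * (c₂')⁻¹ = -(3 * a * c₂⁻¹) := by
  have : Fact p.Prime := ⟨hp⟩
  have hfg : f.comp (-X) = -g := hf ▸ hg ▸ depressedCubic_comp_neg_X a b
  have hfm : f.Monic := by rw [hf]; monicity!
  have hgm : g.Monic := by rw [hg]; monicity!
  have hrem : X ^ p %ₘ g = C (-c₂) * X ^ 2 + C c₁ * X + C (-c₀) := by
    rw [X_pow_modByMonic_of_comp_neg_X_eq_neg hfm hgm hfg (hp.odd_of_ne_two (by omega)),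
      hremf, quadratic_comp_neg_X, C_neg, C_neg]
    ring
  obtain ⟨h₂, h₁, h₀⟩ := quadratic_eq_quadratic_iff.1 (hremg.symm.trans hrem)
  refine ⟨irreducible_of_comp_neg_X_eq_neg hfg hirr, h₂, h₁, h₀, ?_⟩
  rw [h₂, inv_neg, mul_neg]

/-- If `f = X³ + aX + b` is irreducible over `GF(p)` (`p ≥ 5` prime, `a ≠ 0`),
then so is `g = X³ + aX - b`, and if `X^p ≡ c₂X² + c₁X + c₀ (mod f)` and
`X^p ≡ c₂'X² + c₁'X + c₀' (mod g)`, then `c₂' = -c₂`, `c₁' = c₁`, `c₀' = -c₀`,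
and `3a·(c₂')⁻¹ = -(3a·c₂⁻¹)`. -/
theorem gfp3_sqrt_neg_b (p : ℕ) (hp : p.Prime) (hp5 : 5 ≤ p)
    (a b : ZMod p) (ha : a ≠ 0)
    (f g : (ZMod p)[X])
    (hf : f = X ^ 3 + C a * X + C b) (hg : g = X ^ 3 + C a * X - C b)
    (hirr : Irreducible f)
    (c₀ c₁ c₂ c₀' c₁' c₂' : ZMod p)
    (hremf : (X : (ZMod p)[X]) ^ p %ₘ f = C c₂ * X ^ 2 + C c₁ * X + C c₀)
    (hremg : (X : (ZMod p)[X]) ^ p %ₘ g = C c₂' * X ^ 2 + C c₁' * X + C c₀') :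
    Irreducible g ∧ c₂' = -c₂ ∧ c₁' = c₁ ∧ c₀' = -c₀ ∧
      3 * a * (c₂')⁻¹ = -(3 * a * c₂⁻¹) :=
  gfp3_sqrt_neg_b_general p hp hp5 a b f g hf hg hirr c₀ c₁ c₂ c₀' c₁' c₂' hremf hremg
end

section
/- Let $p$ be a prime with $p \equiv 1 \pmod 6$, let $b \in \mathrm{GF}(p)$, and let $a_1, a_2 \in \mathrm{GF}(p)$ be nonzero elements with $a_1^3 = a_2^3$. Then $X^3 + a_1 X + b$ is irreducible over $\mathrm{GF}(p)$ if and only if $X^3 + a_2 X + b$ is irreducible over $\mathrm{GF}(p)$; moreover, if both are irreducible and $X^p \equiv c_2^{(i)} X^2 + c_1^{(i)} X + c_0^{(i)} \pmod{X^3 + a_i X + b}$ for $i = 1, 2$, then $3a_1 \cdot (c_2^{(1)})^{-1} = 3a_2 \cdot (c_2^{(2)})^{-1}$ in $\mathrm{GF}(p)$. -/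
/-!
Write `a₂ = u a₁` with `u³ = 1`. The substitution `X ↦ uX` is an automorphism of `GF(p)[X]`
carrying `X³ + a₁X + b` to `X³ + a₂X + b`, so it preserves irreducibility and transports
division with remainder. Since `uᵖ = u`, it sends `Xᵖ` to `u Xᵖ`; comparing the `X²`-coefficients
of the remainders gives `c₂' = u c₂`, and `u` cancels in `3a₂ / c₂' = 3a₁ / c₂`.
-/

open Polynomial

namespace Polynomial

section

variable {R : Type*} [CommRing R] [IsDomain R]

theorem support_comp_C_mul_X {u : R} (hu : u ≠ 0) (f : R[X]) :
    (f.comp (C u * X)).support = f.support := by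
  ext n
  simp [hu]

theorem degree_comp_C_mul_X {u : R} (hu : u ≠ 0) (f : R[X]) :
    (f.comp (C u * X)).degree = f.degree := by
  rw [degree, degree, support_comp_C_mul_X hu]

theorem comp_C_mul_X_modByMonic {u : R} (hu : u ≠ 0) {f : R[X]} (hf : f.Monic)
    (hfu : (f.comp (C u * X)).Monic) (g : R[X]) :
    g.comp (C u * X) %ₘ f.comp (C u * X) = (g %ₘ f).comp (C u * X) := by
  refine (div_modByMonic_unique ((g /ₘ f).comp (C u * X)) _ hfu ⟨?_, ?_⟩).2
  · rw [← mul_comp, ← add_comp, modByMonic_add_div]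
  · rw [degree_comp_C_mul_X hu, degree_comp_C_mul_X hu]
    exact degree_modByMonic_lt g hf

end

theorem irreducible_comp_C_mul_X_iff {R : Type*} [CommRing R] {u : R} (hu : IsUnit u)
    (f : R[X]) :
    Irreducible (f.comp (C u * X)) ↔ Irreducible f := by
  let := hu.invertible
  simpa [comp_eq_aeval] using MulEquiv.irreducible_iff (algEquivCMulXAddC u 0).toMulEquiv (x := f)

theorem X_pow_modByMonic_comp_C_mul_X {K : Type*} [Field K] {u : K} (hu : u ≠ 0) {n : ℕ}
    (hun : u ^ n = u) {f : K[X]} (hf : f.Monic) (hfu : (f.comp (C u * X)).Monic) :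
    X ^ n %ₘ f.comp (C u * X) = C u⁻¹ * (X ^ n %ₘ f).comp (C u * X) := by
  have h := comp_C_mul_X_modByMonic hu hf hfu (X ^ n)
  rw [X_pow_comp, mul_pow, ← C_pow, hun, ← smul_eq_C_mul, smul_modByMonic, smul_eq_C_mul] at h
  rw [← h, ← mul_assoc, ← C_mul, inv_mul_cancel₀ hu, C_1, one_mul]

theorem monic_X_pow_three_add_C_mul_X_add_C {R : Type*} [CommRing R] (a b : R) :
    (X ^ 3 + C a * X + C b : R[X]).Monic := by
  monicity!

theorem X_pow_three_add_C_mul_X_add_C_comp {R : Type*} [CommRing R] {u : R} (hu : u ^ 3 = 1)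
    (a b : R) :
    (X ^ 3 + C a * X + C b : R[X]).comp (C u * X) = X ^ 3 + C (u * a) * X + C b := by
  simp only [add_comp, mul_comp, X_pow_comp, C_comp, X_comp, mul_pow, ← C_pow, hu, C_1, one_mul,
    C_mul]
  ring

end Polynomial

theorem gfp3_sqrt_indep_of_cube_root_general (p : ℕ) (hp : p.Prime)
    (b a₁ a₂ : ZMod p) (ha₁ : a₁ ≠ 0) (hcube : a₁ ^ 3 = a₂ ^ 3) :
    (Irreducible (X ^ 3 + C a₁ * X + C b : (ZMod p)[X]) ↔
      Irreducible (X ^ 3 + C a₂ * X + C b : (ZMod p)[X])) ∧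
    (Irreducible (X ^ 3 + C a₁ * X + C b : (ZMod p)[X]) →
      Irreducible (X ^ 3 + C a₂ * X + C b : (ZMod p)[X]) →
      ∀ c₀ c₁ c₂ c₀' c₁' c₂' : ZMod p,
        (X : (ZMod p)[X]) ^ p %ₘ (X ^ 3 + C a₁ * X + C b)
          = C c₂ * X ^ 2 + C c₁ * X + C c₀ →
        (X : (ZMod p)[X]) ^ p %ₘ (X ^ 3 + C a₂ * X + C b)
          = C c₂' * X ^ 2 + C c₁' * X + C c₀' →
        3 * a₁ * c₂⁻¹ = 3 * a₂ * (c₂')⁻¹) := by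
  have : Fact p.Prime := ⟨hp⟩
  set u := a₂ / a₁
  have hu3 : u ^ 3 = 1 := by rw [div_pow, ← hcube, div_self (pow_ne_zero 3 ha₁)]
  have hu : u ≠ 0 := by rintro h; simp [h] at hu3
  have hua : u * a₁ = a₂ := div_mul_cancel₀ a₂ ha₁
  have hcomp : (X ^ 3 + C a₁ * X + C b).comp (C u * X) = X ^ 3 + C a₂ * X + C b := by
    rw [X_pow_three_add_C_mul_X_add_C_comp hu3, hua]
  refine ⟨by rw [← hcomp, irreducible_comp_C_mul_X_iff hu.isUnit],
    fun _ _ c₀ c₁ c₂ c₀' c₁' c₂' h₁ h₂ => ?_⟩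
  have hmod := X_pow_modByMonic_comp_C_mul_X hu (ZMod.pow_card u)
    (monic_X_pow_three_add_C_mul_X_add_C a₁ b) (hcomp ▸ monic_X_pow_three_add_C_mul_X_add_C a₂ b)
  rw [hcomp, h₁, h₂] at hmod
  have hc₂ : c₂' = u⁻¹ * (c₂ * u ^ 2) := by
    have h := congrArg (coeff · 2) hmod
    simp only [coeff_C_mul, comp_C_mul_X_coeff] at h
    simpa [coeff_X] using h
  rw [hc₂, ← hua]
  field_simp

/-- For `p ≡ 1 (mod 6)` and nonzero `a₁, a₂ ∈ GF(p)` with `a₁³ = a₂³`, the polynomial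
`X³ + a₁X + b` is irreducible iff `X³ + a₂X + b` is, and when both are irreducible,
the two square roots `3aᵢ·(c₂⁽ⁱ⁾)⁻¹` of the discriminant agree. -/
theorem gfp3_sqrt_indep_of_cube_root (p : ℕ) (hp : p.Prime) (hp6 : p % 6 = 1)
    (b a₁ a₂ : ZMod p) (ha₁ : a₁ ≠ 0) (ha₂ : a₂ ≠ 0) (hcube : a₁ ^ 3 = a₂ ^ 3) :
    (Irreducible (X ^ 3 + C a₁ * X + C b : (ZMod p)[X]) ↔
      Irreducible (X ^ 3 + C a₂ * X + C b : (ZMod p)[X])) ∧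
    (Irreducible (X ^ 3 + C a₁ * X + C b : (ZMod p)[X]) →
      Irreducible (X ^ 3 + C a₂ * X + C b : (ZMod p)[X]) →
      ∀ c₀ c₁ c₂ c₀' c₁' c₂' : ZMod p,
        (X : (ZMod p)[X]) ^ p %ₘ (X ^ 3 + C a₁ * X + C b)
          = C c₂ * X ^ 2 + C c₁ * X + C c₀ →
        (X : (ZMod p)[X]) ^ p %ₘ (X ^ 3 + C a₂ * X + C b)
          = C c₂' * X ^ 2 + C c₁' * X + C c₀' →
        3 * a₁ * c₂⁻¹ = 3 * a₂ * (c₂')⁻¹) :=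
  gfp3_sqrt_indep_of_cube_root_general p hp b a₁ a₂ ha₁ hcube
end

section
/- Let $p$ be a prime with $p \equiv 5 \pmod 6$, let $d \in \mathrm{GF}(p)$ be a nonzero square, and let $b \in \mathrm{GF}(p)$. Set $j = -(d + 27b^2) \cdot 4^{-1}$ and $a = j^{(2p-1)/3}$ in $\mathrm{GF}(p)$, and let $f(X) = X^3 + aX + b$. If $f$ is irreducible over $\mathrm{GF}(p)$, and $X^p \equiv c_2 X^2 + c_1 X + c_0 \pmod{f(X)}$, then $c_2 \ne 0$ and the element $t = 3a \cdot c_2^{-1}$ satisfies $t^2 = d$ in $\mathrm{GF}(p)$; that is, the output of the $\mathrm{GF}(p^3)$ square root algorithm on input $(d, b, p)$ is a square root of $d$ modulo $p$ whenever $f$ is irreducible. -/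
/-!
Let `α` be a root of `f` in `GF(p³)`. Frobenius permutes the roots `α, β = α ^ p, γ = β ^ p`
cyclically, and on roots it is the quadratic `c₂ X² + c₁ X + c₀`. Pairing these three relations
with `1`, `x`, `x²` and summing yields `3a · δ = Δ · c₂`, where `δ = (α - β)(β - γ)(γ - α)` and
`δ² = Δ = -(4a³ + 27b²)`. Hence `3a / c₂ = δ` is a square root of the discriminant `Δ`, and `a` is
the cube root chosen exactly so that `Δ = d`.
-/

open Polynomial

section DepressedCubic

variable {R : Type*} [CommRing R] {α β γ A B : R}

theorem vieta_of_roots_depressed_cubic [IsDomain R] (hα : α ^ 3 + A * α + B = 0)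
    (hβ : β ^ 3 + A * β + B = 0) (hγ : γ ^ 3 + A * γ + B = 0)
    (hαβ : α ≠ β) (hβγ : β ≠ γ) (hγα : γ ≠ α) :
    α + β + γ = 0 ∧ α * β + β * γ + γ * α = A ∧ α * β * γ = -B := by
  have hquotαβ : α ^ 2 + α * β + β ^ 2 + A = 0 := by
    refine (mul_eq_zero.mp ?_).resolve_left (sub_ne_zero.mpr hαβ)
    linear_combination hα - hβ
  have hquotαγ : α ^ 2 + α * γ + γ ^ 2 + A = 0 := by
    refine (mul_eq_zero.mp ?_).resolve_left (sub_ne_zero.mpr hγα.symm)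
    linear_combination hα - hγ
  have hsum : α + β + γ = 0 := by
    refine (mul_eq_zero.mp ?_).resolve_left (sub_ne_zero.mpr hβγ)
    linear_combination hquotαβ - hquotαγ
  obtain rfl : γ = -α - β := by linear_combination hsum
  exact ⟨by ring, by linear_combination -hquotαβ, by linear_combination hα - α * hquotαβ⟩

theorem vandermonde_sq_of_vieta (h₁ : α + β + γ = 0) (h₂ : α * β + β * γ + γ * α = A)
    (h₃ : α * β * γ = -B) :
    ((α - β) * (β - γ) * (γ - α)) ^ 2 = -(4 * A ^ 3 + 27 * B ^ 2) := by
  obtain rfl : γ = -α - β := by linear_combination h₁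
  obtain rfl : A = _ := h₂.symm
  obtain rfl : B = _ := neg_eq_iff_eq_neg.mp h₃.symm
  ring

theorem three_mul_mul_vandermonde_of_cyclic {c₀ c₁ c₂ : R} (h₁ : α + β + γ = 0)
    (h₂ : α * β + β * γ + γ * α = A) (h₃ : α * β * γ = -B)
    (hσα : β = c₂ * α ^ 2 + c₁ * α + c₀) (hσβ : γ = c₂ * β ^ 2 + c₁ * β + c₀)
    (hσγ : α = c₂ * γ ^ 2 + c₁ * γ + c₀) :
    3 * A * ((α - β) * (β - γ) * (γ - α)) = -(4 * A ^ 3 + 27 * B ^ 2) * c₂ := by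
  obtain rfl : γ = -α - β := by linear_combination h₁
  -- sum the cyclic relations against `1`, `x` and `x ^ 2`, and use Newton's identities
  have tr₀ : 3 * c₀ = 2 * A * c₂ := by
    linear_combination -(hσα + hσβ + hσγ) + 2 * c₂ * h₂
  have tr₁ : A = -3 * B * c₂ - 2 * A * c₁ := by
    linear_combination α * hσα + β * hσβ + (-α - β) * hσγ - (1 + 2 * c₁) * h₂ + 3 * c₂ * h₃
  have tr₂ : α ^ 2 * β + β ^ 2 * (-α - β) + (-α - β) ^ 2 * α =
      2 * A ^ 2 * c₂ - 3 * B * c₁ - 2 * A * c₀ := by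
    linear_combination α ^ 2 * hσα + β ^ 2 * hσβ + (-α - β) ^ 2 * hσγ
      + (2 * c₂ * (A - (α ^ 2 + α * β + β ^ 2)) - 2 * c₀) * h₂ + 3 * c₁ * h₃
  linear_combination -6 * A * tr₂ + 9 * B * tr₁ + 4 * A ^ 2 * tr₀ - 9 * A * h₃

theorem sq_three_mul_eq_disc_mul_sq_of_cyclic [IsDomain R] {c₀ c₁ c₂ : R}
    (hα : α ^ 3 + A * α + B = 0) (hβ : β ^ 3 + A * β + B = 0) (hγ : γ ^ 3 + A * γ + B = 0)
    (hαβ : α ≠ β) (hβγ : β ≠ γ) (hγα : γ ≠ α)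
    (hσα : β = c₂ * α ^ 2 + c₁ * α + c₀) (hσβ : γ = c₂ * β ^ 2 + c₁ * β + c₀)
    (hσγ : α = c₂ * γ ^ 2 + c₁ * γ + c₀) :
    (3 * A) ^ 2 = -(4 * A ^ 3 + 27 * B ^ 2) * c₂ ^ 2 := by
  obtain ⟨h₁, h₂, h₃⟩ := vieta_of_roots_depressed_cubic hα hβ hγ hαβ hβγ hγα
  have hV0 : (α - β) * (β - γ) * (γ - α) ≠ 0 :=
    mul_ne_zero (mul_ne_zero (sub_ne_zero.2 hαβ) (sub_ne_zero.2 hβγ)) (sub_ne_zero.2 hγα)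
  have h3A : 3 * A = (α - β) * (β - γ) * (γ - α) * c₂ := by
    refine mul_right_cancel₀ hV0 ?_
    linear_combination three_mul_mul_vandermonde_of_cyclic h₁ h₂ h₃ hσα hσβ hσγ
      - c₂ * vandermonde_sq_of_vieta h₁ h₂ h₃
  rw [h3A, mul_pow, vandermonde_sq_of_vieta h₁ h₂ h₃]

end DepressedCubic

theorem FiniteField.aeval_pow_card {K L : Type*} [Field K] [Fintype K] [CommRing L]
    [Algebra K L] (g : K[X]) (x : L) :
    aeval (x ^ Fintype.card K) g = aeval x g ^ Fintype.card K := by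
  rw [← expand_aeval, FiniteField.expand_card, map_pow]

theorem Irreducible.pow_card_pow_eq_self_iff {K B : Type*} [Field K] [Finite K] [Ring B]
    [Nontrivial B] [Algebra K B] {f : K[X]} (hf : Irreducible f) {x : B} (hx : aeval x f = 0)
    (n : ℕ) : x ^ Nat.card K ^ n = x ↔ f.natDegree ∣ n := by
  rw [hf.natDegree_dvd_iff_dvd_X_pow_card_pow_sub_X, ← hf.dvd_iff_aeval_eq_zero hx]
  simp [sub_eq_zero]

theorem FiniteField.sq_three_mul_eq_disc_mul_sq_of_irreducible {K : Type*} [Field K]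
    [Fintype K] {a b c₀ c₁ c₂ : K} (hirr : Irreducible (X ^ 3 + C a * X + C b))
    (hrem : X ^ Fintype.card K %ₘ (X ^ 3 + C a * X + C b) = C c₂ * X ^ 2 + C c₁ * X + C c₀) :
    (3 * a) ^ 2 = -(4 * a ^ 3 + 27 * b ^ 2) * c₂ ^ 2 := by
  set q := Fintype.card K
  set f : K[X] := X ^ 3 + C a * X + C b
  have : Fact (Irreducible f) := ⟨hirr⟩
  let ι := AdjoinRoot.of f
  have hcubic (x : AdjoinRoot f) (hx : aeval x f = 0) : x ^ 3 + ι a * x + ι b = 0 := by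
    simpa [f] using hx
  have hfrob (x : AdjoinRoot f) (hx : aeval x f = 0) :
      x ^ q = ι c₂ * x ^ 2 + ι c₁ * x + ι c₀ := by
    simpa [hrem] using (aeval_modByMonic_eq_self_of_root (p := X ^ q) hx).symm
  have hfixed (x : AdjoinRoot f) (hx : aeval x f = 0) (n : ℕ) : x ^ q ^ n = x ↔ 3 ∣ n := by
    have hdeg : f.natDegree = 3 := by unfold f; compute_degree!
    simpa [hdeg, Nat.card_eq_fintype_card] using hirr.pow_card_pow_eq_self_iff hx n
  have hpow (x : AdjoinRoot f) (hx : aeval x f = 0) : aeval (x ^ q) f = 0 := by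
    rw [FiniteField.aeval_pow_card, hx, zero_pow Fintype.card_ne_zero]
  set α := AdjoinRoot.root f
  have hα : aeval α f = 0 := by rw [AdjoinRoot.aeval_eq, AdjoinRoot.mk_self]
  set β := α ^ q
  set γ := β ^ q
  have hβ : aeval β f = 0 := hpow α hα
  have hγ : aeval γ f = 0 := hpow β hβ
  have hγq : γ ^ q = α := by
    have := (hfixed α hα 3).2 dvd_rfl
    rwa [pow_succ, pow_succ, pow_one, pow_mul, pow_mul] at this
  have hαβ : α ≠ β := fun h ↦ by simpa using (hfixed α hα 1).1 (by simpa using h.symm)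
  have hβγ : β ≠ γ := fun h ↦ by simpa using (hfixed β hβ 1).1 (by simpa using h.symm)
  have hγα : γ ≠ α := fun h ↦ by simpa using (hfixed α hα 2).1 (by rwa [sq, pow_mul])
  apply ι.injective
  simp only [map_pow, map_mul, map_neg, map_add, map_ofNat]
  exact sq_three_mul_eq_disc_mul_sq_of_cyclic (hcubic α hα) (hcubic β hβ) (hcubic γ hγ)
    hαβ hβγ hγα (hfrob α hα) (hfrob β hβ) (hγq ▸ hfrob γ hγ)

theorem FiniteField.pow_two_mul_card_sub_one_div_three_pow_three {K : Type*} [Field K]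
    [Fintype K] (hK : Fintype.card K % 3 = 2) (x : K) :
    (x ^ ((2 * Fintype.card K - 1) / 3)) ^ 3 = x := by
  have hq := Fintype.card_pos (α := K)
  rw [← pow_mul, Nat.div_mul_cancel (by omega), show 2 * Fintype.card K - 1 =
    Fintype.card K - 1 + Fintype.card K by omega, pow_add, FiniteField.pow_card, ← pow_succ,
    Nat.sub_add_cancel hq, FiniteField.pow_card]

theorem FiniteField.not_irreducible_X_pow_three_add_C {K : Type*} [Field K] [Fintype K]
    (hK : Fintype.card K % 3 = 2) (b : K) : ¬Irreducible (X ^ 3 + C b) := fun hirr ↦ by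
  have hroot : (X ^ 3 + C b).IsRoot ((-b) ^ ((2 * Fintype.card K - 1) / 3)) := by
    simp [FiniteField.pow_two_mul_card_sub_one_div_three_pow_three hK]
  have := degree_eq_one_of_irreducible_of_root hirr hroot
  rw [degree_X_pow_add_C (by norm_num)] at this
  norm_num at this

theorem ZMod.natCast_ne_zero_of_pos_of_lt {n p : ℕ} (h0 : 0 < n) (hn : n < p) :
    (n : ZMod p) ≠ 0 := by
  rw [Ne, ZMod.natCast_eq_zero_iff]
  exact Nat.not_dvd_of_pos_of_lt h0 hn

theorem gfp3_sqrt_algorithm_correct_general (p : ℕ) (hp : p.Prime) (hp6 : p % 6 = 5)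
    (d : ZMod p) (b : ZMod p)
    (j a : ZMod p) (hj : j = -(d + 27 * b ^ 2) * (4 : ZMod p)⁻¹)
    (ha : a = j ^ ((2 * p - 1) / 3))
    (f : (ZMod p)[X]) (hf : f = X ^ 3 + C a * X + C b)
    (hirr : Irreducible f)
    (c₀ c₁ c₂ : ZMod p)
    (hrem : (X : (ZMod p)[X]) ^ p %ₘ f = C c₂ * X ^ 2 + C c₁ * X + C c₀) :
    c₂ ≠ 0 ∧ (3 * a * c₂⁻¹) ^ 2 = d := by
  have : Fact p.Prime := ⟨hp⟩
  have hK : Fintype.card (ZMod p) % 3 = 2 := by rw [ZMod.card]; omega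
  have h3 : (3 : ZMod p) ≠ 0 := by
    exact_mod_cast ZMod.natCast_ne_zero_of_pos_of_lt (n := 3) (p := p) (by norm_num) (by omega)
  have h4 : (4 : ZMod p) ≠ 0 := by
    exact_mod_cast ZMod.natCast_ne_zero_of_pos_of_lt (n := 4) (p := p) (by norm_num) (by omega)
  have ha3 : a ^ 3 = j := by
    have := FiniteField.pow_two_mul_card_sub_one_div_three_pow_three hK j
    rwa [ZMod.card, ← ha] at this
  have hdisc : -(4 * a ^ 3 + 27 * b ^ 2) = d := by
    linear_combination -4 * ha3 - 4 * hj + (d + 27 * b ^ 2) * mul_inv_cancel₀ h4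
  subst hf
  have ha0 : a ≠ 0 := by
    rintro rfl
    exact FiniteField.not_irreducible_X_pow_three_add_C hK b (by simpa using hirr)
  have key := FiniteField.sq_three_mul_eq_disc_mul_sq_of_irreducible hirr (by rwa [ZMod.card])
  rw [hdisc] at key
  have hc₂ : c₂ ≠ 0 := by
    rintro rfl
    simp [h3, ha0] at key
  exact ⟨hc₂, by rw [mul_pow, key]; field_simp⟩

/-- **Correctness of the GF(p³) square root algorithm** for `p ≡ 5 (mod 6)`: with
`j = -(d + 27b²)·4⁻¹`, `a = j^((2p-1)/3)` and `f = X³ + aX + b`, if `f` is irreducible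
over `GF(p)` and `X^p ≡ c₂X² + c₁X + c₀ (mod f)`, then `c₂ ≠ 0` and
`t = 3a·c₂⁻¹` satisfies `t² = d`. -/
theorem gfp3_sqrt_algorithm_correct (p : ℕ) (hp : p.Prime) (hp6 : p % 6 = 5)
    (d : ZMod p) (hd : IsSquare d) (hd0 : d ≠ 0) (b : ZMod p)
    (j a : ZMod p) (hj : j = -(d + 27 * b ^ 2) * (4 : ZMod p)⁻¹)
    (ha : a = j ^ ((2 * p - 1) / 3))
    (f : (ZMod p)[X]) (hf : f = X ^ 3 + C a * X + C b)
    (hirr : Irreducible f)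
    (c₀ c₁ c₂ : ZMod p)
    (hrem : (X : (ZMod p)[X]) ^ p %ₘ f = C c₂ * X ^ 2 + C c₁ * X + C c₀) :
    c₂ ≠ 0 ∧ (3 * a * c₂⁻¹) ^ 2 = d :=
  gfp3_sqrt_algorithm_correct_general p hp hp6 d b j a hj ha f hf hirr c₀ c₁ c₂ hrem
end
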